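/- arXiv:2011.09282 — 4 statements merged into one kernel-verified Lean document; each statement's English description precedes it below -/
import Mathlib

section
/- Let (a_n) be a sequence of non-negative real numbers with a_n ≤ c · Σ_{i+j=n, i,j≥1} a_i a_j for all n ≥ 2, where c > 0. Then for all n ≥ 1, a_n ≤ c^{n-1} · a_1^n · C_{n-1}, where C_k denotes the k-th Catalan number. -/
/-- If a sequence of nonnegative reals satisfies `a n ≤ c * ∑_{i+j=n, i,j ≥ 1} a i * a j`
for all `n ≥ 2`, then `a n ≤ c^(n-1) * (a 1)^n * C_{n-1}` where `C` is the Catalan number. -/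
theorem stmt0 (a : ℕ → ℝ) (c : ℝ) (hc : 0 < c) (ha : ∀ n, 0 ≤ a n)
    (hrec : ∀ n, 2 ≤ n → a n ≤ c * ∑ i ∈ Finset.Ioo 0 n, a i * a (n - i)) :
    ∀ n, 1 ≤ n → a n ≤ c ^ (n - 1) * a 1 ^ n * (catalan (n - 1) : ℝ) := by
  intro n
  induction n using Nat.strong_induction_on with
  | _ n ih =>
    intro hn
    rcases Nat.lt_or_ge n 2 with h2 | h2
    · interval_cases n
      simp
    · have key : ∑ i ∈ Finset.Ioo 0 n, (c ^ (i - 1) * a 1 ^ i * (catalan (i - 1) : ℝ)) *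
          (c ^ (n - i - 1) * a 1 ^ (n - i) * (catalan (n - i - 1) : ℝ))
          = c ^ (n - 2) * a 1 ^ n *
            ∑ k ∈ Finset.range (n - 1), ((catalan k : ℝ) * (catalan (n - 2 - k) : ℝ)) := by
        rw [Finset.mul_sum, show Finset.Ioo 0 n = Finset.Ico 1 n by rfl,
          Finset.sum_Ico_eq_sum_range]
        apply Finset.sum_congr rfl
        intro k hk
        simp only [Finset.mem_range] at hk
        have h1 : 1 + k - 1 = k := by omega
        have h3 : n - (1 + k) - 1 = n - 2 - k := by omega
        have h2' : n - (1 + k) = n - 1 - k := by omega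
        rw [h1, h3, h2']
        have hc1 : c ^ k * c ^ (n - 2 - k) = c ^ (n - 2) := by
          rw [← pow_add]; congr 1; omega
        have ha1 : a 1 ^ (1 + k) * a 1 ^ (n - 1 - k) = a 1 ^ n := by
          rw [← pow_add]; congr 1; omega
        calc c ^ k * a 1 ^ (1 + k) * (catalan k : ℝ) *
              (c ^ (n - 2 - k) * a 1 ^ (n - 1 - k) * (catalan (n - 2 - k) : ℝ))
            = (c ^ k * c ^ (n - 2 - k)) * (a 1 ^ (1 + k) * a 1 ^ (n - 1 - k)) *
              ((catalan k : ℝ) * (catalan (n - 2 - k) : ℝ)) := by ring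
          _ = _ := by rw [hc1, ha1]
      have hcat : ((catalan (n - 1) : ℕ) : ℝ)
          = ∑ k ∈ Finset.range (n - 1), ((catalan k : ℝ) * (catalan (n - 2 - k) : ℝ)) := by
        have := catalan_succ (n - 2)
        rw [show n - 1 = n - 2 + 1 by omega, this]
        rw [Fin.sum_univ_eq_sum_range (fun i => catalan i * catalan (n - 2 - i)) (n - 2 + 1)]
        push_cast
        rfl
      calc a n ≤ c * ∑ i ∈ Finset.Ioo 0 n, a i * a (n - i) := hrec n h2
        _ ≤ c * ∑ i ∈ Finset.Ioo 0 n, (c ^ (i - 1) * a 1 ^ i * (catalan (i - 1) : ℝ)) *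
            (c ^ (n - i - 1) * a 1 ^ (n - i) * (catalan (n - i - 1) : ℝ)) := by
            apply mul_le_mul_of_nonneg_left _ hc.le
            apply Finset.sum_le_sum
            intro i hi
            simp only [Finset.mem_Ioo] at hi
            exact mul_le_mul (ih i hi.2 hi.1) (ih (n - i) (by omega) (by omega)) (ha _)
              (by have := ha 1; positivity)
        _ = c ^ (n - 1) * a 1 ^ n * (catalan (n - 1) : ℝ) := by
            rw [key, hcat,
              show c ^ (n - 1) = c * c ^ (n - 2) by rw [← pow_succ']; congr 1; omega]
            ring
end

section
/- Let (a_n) be a sequence of non-negative reals with a_n ≤ c · Σ_{i+j=n, i,j≥1} a_i a_j for all n ≥ 2, where c > 0 and a_1 > 0. Then the power series Σ_{n≥1} a_n ζ^n converges absolutely for all complex ζ with |ζ| < 1/(4 c a_1). -/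
/-!
Comparing the recursion with the Catalan recursion `C (n + 1) = ∑ C i * C (n - i)` gives
`a (n + 1) ≤ (c a₁)ⁿ a₁ Cₙ` by strong induction. Since `Cₙ ≤ 4ⁿ`, the series is dominated by a
geometric series of ratio `4 c a₁ |ζ| < 1`.
-/

open Finset

theorem catalan_le_four_pow (n : ℕ) : catalan n ≤ 4 ^ n := by
  rw [catalan_eq_centralBinom_div]
  exact (Nat.div_le_self _ _).trans n.centralBinom_le_four_pow

theorem Finset.sum_Ioo_zero_eq_sum_antidiagonal {M : Type*} [AddCommMonoid M] (f : ℕ → ℕ → M)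
    (n : ℕ) :
    ∑ i ∈ Ioo 0 (n + 2), f i (n + 2 - i) = ∑ ij ∈ antidiagonal n, f (ij.1 + 1) (ij.2 + 1) := by
  rw [Nat.sum_antidiagonal_eq_sum_range_succ (fun i j => f (i + 1) (j + 1)),
    ← Ico_add_one_left_eq_Ioo, sum_Ico_eq_sum_range]
  refine sum_congr (by simp) fun i hi => ?_
  rw [mem_range] at hi
  congr 1 <;> omega

theorem le_pow_mul_catalan_of_le_sum_antidiagonal {R : Type*} [CommSemiring R] [PartialOrder R]
    [IsOrderedRing R] {b : ℕ → R} {c : R} (hc : 0 ≤ c) (hb : ∀ n, 0 ≤ b n)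
    (hrec : ∀ n, b (n + 1) ≤ c * ∑ ij ∈ antidiagonal n, b ij.1 * b ij.2) (n : ℕ) :
    b n ≤ (c * b 0) ^ n * b 0 * catalan n := by
  induction n using Nat.strong_induction_on with
  | _ n ih =>
    cases n with
    | zero => simp
    | succ n =>
      calc b (n + 1) ≤ c * ∑ ij ∈ antidiagonal n, b ij.1 * b ij.2 := hrec n
        _ ≤ c * ∑ ij ∈ antidiagonal n, (c * b 0) ^ ij.1 * b 0 * catalan ij.1 *
              ((c * b 0) ^ ij.2 * b 0 * catalan ij.2) := by
          refine mul_le_mul_of_nonneg_left (sum_le_sum fun ij hij => ?_) hc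
          have h1 := ih _ (Nat.antidiagonal.fst_lt hij)
          exact mul_le_mul h1 (ih _ (Nat.antidiagonal.snd_lt hij)) (hb _) ((hb _).trans h1)
        _ = (c * b 0) ^ (n + 1) * b 0 * catalan (n + 1) := by
          rw [catalan_succ', Nat.cast_sum, mul_sum, mul_sum]
          refine sum_congr rfl fun ij hij => ?_
          rw [← mem_antidiagonal.mp hij]
          push_cast
          ring

theorem stmt2_general (a : ℕ → ℝ) (c : ℝ) (hc : 0 < c) (ha : ∀ n, 0 ≤ a n)
    (hrec : ∀ n, 2 ≤ n → a n ≤ c * ∑ i ∈ Finset.Ioo 0 n, a i * a (n - i)) :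
    ∀ ζ : ℂ, ‖ζ‖ < 1 / (4 * c * a 1) →
      Summable (fun n : ℕ => ‖(a (n + 1) : ℂ) * ζ ^ (n + 1)‖) := by
  intro ζ hζ
  have ha1 := ha 1
  have hcatalan : ∀ n, a (n + 1) ≤ (c * a 1) ^ n * a 1 * catalan n :=
    le_pow_mul_catalan_of_le_sum_antidiagonal (b := fun n => a (n + 1)) hc.le (fun n => ha _)
      fun n => by
        simpa only [sum_Ioo_zero_eq_sum_antidiagonal (fun i j => a i * a j)] using
          hrec (n + 2) (by omega)
  have hq : 4 * c * a 1 * ‖ζ‖ < 1 := by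
    rwa [lt_div_iff₀ (one_div_pos.mp ((norm_nonneg ζ).trans_lt hζ)), mul_comm] at hζ
  refine Summable.of_nonneg_of_le (fun n => norm_nonneg _) (fun n => ?_)
    ((summable_geometric_of_lt_one (by positivity) hq).mul_left (a 1 * ‖ζ‖))
  calc ‖(a (n + 1) : ℂ) * ζ ^ (n + 1)‖ = a (n + 1) * ‖ζ‖ ^ (n + 1) := by
        simp [abs_of_nonneg (ha _)]
    _ ≤ (c * a 1) ^ n * a 1 * 4 ^ n * ‖ζ‖ ^ (n + 1) := by
        gcongr
        exact (hcatalan n).trans (by gcongr; exact_mod_cast catalan_le_four_pow n)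
    _ = a 1 * ‖ζ‖ * (4 * c * a 1 * ‖ζ‖) ^ n := by ring

/-- If a sequence of nonnegative reals satisfies `a n ≤ c * ∑_{i+j=n, i,j≥1} a i * a j` for
`n ≥ 2`, with `c > 0` and `a 1 > 0`, then `∑_{n ≥ 1} a n ζ^n` converges absolutely for all
complex `ζ` with `|ζ| < 1/(4 c a₁)`. -/
theorem stmt2 (a : ℕ → ℝ) (c : ℝ) (hc : 0 < c) (ha : ∀ n, 0 ≤ a n) (ha1 : 0 < a 1)
    (hrec : ∀ n, 2 ≤ n → a n ≤ c * ∑ i ∈ Finset.Ioo 0 n, a i * a (n - i)) :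
    ∀ ζ : ℂ, ‖ζ‖ < 1 / (4 * c * a 1) →
      Summable (fun n : ℕ => ‖(a (n + 1) : ℂ) * ζ ^ (n + 1)‖) :=
  stmt2_general a c hc ha hrec
end

section
/- Let V be a finite-dimensional real vector space, I a complex structure on V (a linear map with I² = −1), and Ω = ω + iη a complex bilinear alternating 2-form on V (ω, η real alternating forms) such that η is nondegenerate and I = η^{-1} ∘ ω (i.e., ω(u, v) = η(Iu, v) for all u, v). Let W ⊆ V be a subspace such that the restriction of the complexification of Ω to the complexification of W is nondegenerate. Then W ∩ I(W) = 0. -/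
/-- Pointwise linear-algebra content of Lemma 3.3: if `Ω = ω + iη` is a complex bilinear
alternating form on a real vector space `V` with complex structure `I = η⁻¹ ∘ ω`, and `W` is a
subspace on which the complexification of `Ω` is nondegenerate, then `W ∩ I(W) = 0`.
A pair `(u, v) ∈ W × W` encodes the element `u + iv` of the complexification of `W`, and the
complex number `Ω_ℂ(u + iv, x + iy)` is written out in terms of `ω` and `η`. -/
theorem stmt3 {V : Type*} [AddCommGroup V] [Module ℝ V] [FiniteDimensional ℝ V]
    (I : V →ₗ[ℝ] V) (hI : ∀ v, I (I v) = -v)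
    (ω η : V →ₗ[ℝ] V →ₗ[ℝ] ℝ)
    (hωalt : ∀ v, ω v v = 0) (hηalt : ∀ v, η v v = 0)
    (hηnd : ∀ v, (∀ u, η v u = 0) → v = 0)
    (hIωη : ∀ u v, ω u v = η (I u) v)
    (W : Submodule ℝ V)
    (hnd : ∀ u ∈ W, ∀ v ∈ W,
      (∀ x ∈ W, ∀ y ∈ W,
        ((ω u x - η v x - η u y - ω v y : ℝ) : ℂ)
          + ((η u x + ω v x + ω u y - η v y : ℝ) : ℂ) * Complex.I = 0) →
      u = 0 ∧ v = 0) :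
    W ⊓ Submodule.map I W = ⊥ := by
  rw [eq_bot_iff]
  intro x hx
  rw [Submodule.mem_inf] at hx
  obtain ⟨hxW, v, hvW, rfl⟩ := hx
  rw [Submodule.mem_bot]
  have key := hnd (I v) hxW (-v) (W.neg_mem hvW) ?_
  · rw [key.1]
  · intro x hx y hy
    have h1 : ω (I v) x = - η v x := by rw [hIωη, hI]; simp
    have h2 : ω (I v) y = - η v y := by rw [hIωη, hI]; simp
    have h3 : η (I v) x = ω v x := (hIωη v x).symm
    have h4 : η (I v) y = ω v y := (hIωη v y).symm
    simp [h1, h2, h3, h4]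
end

section
/- Let ω(ζ) = Σ_{n≥1} ω_n ζ^n be a formal power series of (1,1)-forms on a compact Kähler surface X with holomorphic Poisson bivector σ, where ω₁ is a fixed ∂̄-closed (1,1)-form and ω_n := ∂ ∂̄* G (Σ_{i+j=n} (1/2) i_σ(ω_i ∧ ω_j)) for n ≥ 2, with G the Green operator of the Kähler Laplacian. Then ω_{2n+1} = 0 for all n ≥ 1 and ω_n ∧ ω₁ = 0 for all n ≥ 2, assuming: (i) for any (0,2)-form γ on the surface, ∂∂̄*Gγ satisfies (∂∂̄*Gγ) ∧ ω₁ = 0, and (ii) i_σ(α ∧ β) is a (0,2)-form for (1,1)-forms α, β with α ∧ ω₁ = 0 implying i_σ(α ∧ ω₁)-type products vanish appropriately. -/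
/-- Abstract content of the recursion in the proof of Theorem C: on a compact Kähler surface,
let `E` be the `(1,1)`-forms, `F` the `(0,2)`-forms, `G22` the `(2,2)`-forms, `P = ∂∂̄*G`
(with `G` the Green operator), `Q(α, β) = i_σ(α ∧ β)` (symmetric, `(0,2)`-valued on pairs of
`(1,1)`-forms), and `L(α) = α ∧ ω₁` the Lefschetz operator. Define
`ω_n = P (∑_{i+j=n, i,j≥1} (1/2) Q(ω_i, ω_j))` for `n ≥ 2`. Assuming (i) `L ∘ P = 0`
(from the Kähler identity `[∂̄*, L] = i∂` and `Λ^{1,3} = 0` on a surface) and (ii)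
`L α = 0 → Q(α, ω₁) = 0`, one has `ω_{2n+1} = 0` for all `n ≥ 1` and `ω_n ∧ ω₁ = 0` for all
`n ≥ 2`. -/
theorem stmt19 {E F G22 : Type*} [AddCommGroup E] [Module ℂ E]
    [AddCommGroup F] [Module ℂ F] [AddCommGroup G22] [Module ℂ G22]
    (P : F →ₗ[ℂ] E)
    (Q : E →ₗ[ℂ] E →ₗ[ℂ] F) (hQsymm : ∀ a b, Q a b = Q b a)
    (L : E →ₗ[ℂ] G22)
    (hPL : ∀ γ : F, L (P γ) = 0)
    (ω : ℕ → E)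
    (hQL : ∀ α : E, L α = 0 → Q α (ω 1) = 0)
    (hrec : ∀ n : ℕ, 2 ≤ n →
      ω n = P (∑ i ∈ Finset.Ioo 0 n, ((1 : ℂ) / 2) • Q (ω i) (ω (n - i)))) :
    (∀ n : ℕ, 1 ≤ n → ω (2 * n + 1) = 0) ∧ (∀ n : ℕ, 2 ≤ n → L (ω n) = 0) := by

  have hL : ∀ n : ℕ, 2 ≤ n → L (ω n) = 0 := by
    intro n hn
    rw [hrec n hn]
    exact hPL _
  have hodd : ∀ m : ℕ, m % 2 = 1 → 3 ≤ m → ω m = 0 := by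
    intro m
    induction m using Nat.strong_induction_on with
    | _ m ih =>
      intro hm hm3
      rw [hrec m (by omega)]
      have hz : ∀ i ∈ Finset.Ioo 0 m, ((1 : ℂ) / 2) • Q (ω i) (ω (m - i)) = 0 := by
        intro i hi
        simp only [Finset.mem_Ioo] at hi
        obtain ⟨h1, h2⟩ := hi
        rcases Nat.even_or_odd i with he | ho
        · rw [Nat.even_iff] at he
          have hmi : (m - i) % 2 = 1 := by omega
          rcases eq_or_lt_of_le (show 1 ≤ m - i by omega) with h | h
          · have hi2 : 2 ≤ i := by omega
            rw [← h, hQL (ω i) (hL i hi2), smul_zero]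
          · have h3 : 3 ≤ m - i := by omega
            rw [ih (m - i) (by omega) hmi h3, map_zero, smul_zero]
        · rw [Nat.odd_iff] at ho
          rcases eq_or_lt_of_le (show 1 ≤ i by omega) with h | h
          · have hi2 : 2 ≤ m - 1 := by omega
            rw [← h, hQsymm, hQL (ω (m - 1)) (hL _ hi2), smul_zero]
          · have h3 : 3 ≤ i := by omega
            rw [ih i h2 ho h3, map_zero, LinearMap.zero_apply, smul_zero]
      rw [Finset.sum_eq_zero hz, map_zero]
  exact ⟨fun n hn => hodd (2 * n + 1) (by omega) (by omega), hL⟩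
end
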